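/- arXiv:2009.06090 — 7 statements merged into one kernel-verified Lean document; each statement's English description precedes it below -/
import Mathlib

section
/- Let V_F be a finite set where each unordered pair of distinct elements u, v ∈ V_F is associated with a bipartition (S_{uv}, S_{vu}) of V_F with u ∈ S_{uv}, v ∈ S_{vu}, and S_{vu} = V_F ∖ S_{uv}, and let V'_F ⊆ V_F. Then there exist at least ⌈|V'_F|/2⌉ elements p' ∈ V'_F with the following property: the number of elements w ∈ V'_F ∖ {p'} satisfying |S_{p'w} ∩ V'_F| ≥ |S_{wp'} ∩ V'_F| is at least (|V'_F| − 1)/4, i.e., 4·|{ w ∈ V'_F ∖ {p'} : |S_{p'w} ∩ V'_F| ≥ |S_{wp'} ∩ V'_F| }| ≥ |V'_F| − 1. -/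
/-- Let `V_F` be a finite set where each pair of distinct elements
`u, v` is associated with a bipartition `(S u v, S v u)` of `V_F` with `u ∈ S u v`,
`v ∈ S v u` and `S v u = V_F \ S u v`, and let `V' ⊆ V_F`. Then there exist at least
`⌈|V'|/2⌉` elements `p' ∈ V'` such that the number of `w ∈ V' \ {p'}` with
`|S p' w ∩ V'| ≥ |S w p' ∩ V'|` is at least `(|V'| - 1)/4`, i.e.
`4 * #{w ∈ V' \ {p'} : |S p' w ∩ V'| ≥ |S w p' ∩ V'|} ≥ |V'| - 1`. -/
theorem many_good_pivots
    {α : Type*} [Fintype α] [DecidableEq α]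
    (S : α → α → Finset α)
    (hS : ∀ u v : α, u ≠ v → u ∈ S u v ∧ S v u = (S u v)ᶜ)
    (V' : Finset α) :
    ∃ P : Finset α, P ⊆ V' ∧ V'.card ≤ 2 * P.card ∧
      ∀ p ∈ P,
        V'.card - 1 ≤
          4 * ((V'.erase p).filter
            (fun w => ((S w p) ∩ V').card ≤ ((S p w) ∩ V').card)).card := by
  classical
  set n := V'.card with hn
  set deg : α → ℕ := fun p => ((V'.erase p).filter
      (fun w => ((S w p) ∩ V').card ≤ ((S p w) ∩ V').card)).card with hdeg
  set P := V'.filter (fun p => n - 1 ≤ 4 * deg p) with hP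
  set B := V'.filter (fun p => ¬ (n - 1 ≤ 4 * deg p)) with hB
  have hPB : P.card + B.card = n :=
    Finset.card_filter_add_card_filter_not (fun p => n - 1 ≤ 4 * deg p)
  have hBsub : B ⊆ V' := Finset.filter_subset _ _
  set dB : α → ℕ := fun p => ((B.erase p).filter
      (fun w => ((S w p) ∩ V').card ≤ ((S p w) ∩ V').card)).card with hdBdef
  have hdB : ∀ p, dB p ≤ deg p := fun p =>
    Finset.card_le_card (Finset.filter_subset_filter _ (Finset.erase_subset_erase _ hBsub))
  have hcard : ∀ p : α, dB p = ∑ w ∈ B,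
      (if w ≠ p ∧ (((S w p) ∩ V').card ≤ ((S p w) ∩ V').card) then 1 else 0) := by
    intro p
    simp only [hdBdef]
    rw [show B.erase p = B.filter (fun w => w ≠ p) from (Finset.filter_ne' B p).symm,
      Finset.filter_filter]
    rw [Finset.card_filter]
  have key : B.card * (B.card - 1) ≤ 2 * ∑ p ∈ B, dB p := by
    have h1 : ∑ p ∈ B, ∑ w ∈ B, (if w ≠ p then 1 else 0)
        = B.card * (B.card - 1) := by
      rw [Finset.sum_congr rfl (fun p hp => ?_), Finset.sum_const, smul_eq_mul]
      rw [← Finset.card_filter]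
      rw [show B.filter (fun w => w ≠ p) = B.erase p from Finset.filter_ne' B p,
        Finset.card_erase_of_mem hp]
    have h2 : ∀ p ∈ B, ∀ w ∈ B,
        (if w ≠ p then 1 else 0) ≤
          (if w ≠ p ∧ (((S w p) ∩ V').card ≤ ((S p w) ∩ V').card) then 1 else 0)
          + (if p ≠ w ∧ (((S p w) ∩ V').card ≤ ((S w p) ∩ V').card) then 1 else 0) := by
      intro p _ w _
      by_cases hwp : w = p
      · simp [hwp]
      · rw [if_pos hwp]
        rcases le_total (((S w p) ∩ V').card) (((S p w) ∩ V').card) with h | h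
        · rw [if_pos ⟨hwp, h⟩]; exact Nat.le_add_right 1 _
        · have hpw : p ≠ w := fun h' => hwp h'.symm
          rw [if_pos (⟨hpw, h⟩ : p ≠ w ∧ (S p w ∩ V').card ≤ (S w p ∩ V').card)]
          exact Nat.le_add_left 1 _
    calc B.card * (B.card - 1)
        = ∑ p ∈ B, ∑ w ∈ B, (if w ≠ p then 1 else 0) := h1.symm
      _ ≤ ∑ p ∈ B, ∑ w ∈ B,
          ((if w ≠ p ∧ (((S w p) ∩ V').card ≤ ((S p w) ∩ V').card) then 1 else 0)
          + (if p ≠ w ∧ (((S p w) ∩ V').card ≤ ((S w p) ∩ V').card) then 1 else 0)) := by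
            refine Finset.sum_le_sum (fun p hp => Finset.sum_le_sum (fun w hw => ?_))
            exact h2 p hp w hw
      _ = (∑ p ∈ B, ∑ w ∈ B,
          (if w ≠ p ∧ (((S w p) ∩ V').card ≤ ((S p w) ∩ V').card) then 1 else 0))
          + ∑ p ∈ B, ∑ w ∈ B,
          (if p ≠ w ∧ (((S p w) ∩ V').card ≤ ((S w p) ∩ V').card) then 1 else 0) := by
            simp only [Finset.sum_add_distrib]
      _ = (∑ p ∈ B, dB p) + ∑ p ∈ B, dB p := by
            congr 1
            · exact (Finset.sum_congr rfl (fun p _ => (hcard p).symm))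
            · rw [Finset.sum_comm]
              exact Finset.sum_congr rfl (fun w _ => (hcard w).symm)
      _ = 2 * ∑ p ∈ B, dB p := by ring
  have hbadbound : ∀ p ∈ B, 4 * dB p ≤ n - 2 ∧ 2 ≤ n := by
    intro p hp
    have := (Finset.mem_filter.mp hp).2
    have h4 : 4 * deg p < n - 1 := by omega
    have := hdB p
    omega
  have h2B : 2 * B.card ≤ n := by
    rcases Finset.eq_empty_or_nonempty B with hBe | ⟨b, hb⟩
    · simp [hBe]
    · have hsum : 4 * ∑ p ∈ B, dB p ≤ B.card * (n - 2) := by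
        rw [Finset.mul_sum]
        calc ∑ p ∈ B, 4 * dB p ≤ ∑ p ∈ B, (n - 2) :=
              Finset.sum_le_sum (fun p hp => (hbadbound p hp).1)
          _ = B.card * (n - 2) := by rw [Finset.sum_const, smul_eq_mul]
      have hn2 : 2 ≤ n := (hbadbound b hb).2
      have hBpos : 1 ≤ B.card := Finset.card_pos.mpr ⟨b, hb⟩
      have : 2 * (B.card * (B.card - 1)) ≤ B.card * (n - 2) := by
        calc 2 * (B.card * (B.card - 1)) ≤ 2 * (2 * ∑ p ∈ B, dB p) := by
              exact Nat.mul_le_mul_left 2 key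
          _ = 4 * ∑ p ∈ B, dB p := by ring
          _ ≤ B.card * (n - 2) := hsum
      have h3 : B.card * (2 * (B.card - 1)) ≤ B.card * (n - 2) := by
        calc B.card * (2 * (B.card - 1)) = 2 * (B.card * (B.card - 1)) := by ring
          _ ≤ B.card * (n - 2) := this
      have h4 : 2 * (B.card - 1) ≤ n - 2 :=
        Nat.le_of_mul_le_mul_left h3 hBpos
      omega
  refine ⟨P, Finset.filter_subset _ _, by omega, fun p hp => ?_⟩
  exact (Finset.mem_filter.mp hp).2
end

section
/- Let G be a finite simple graph on vertex set V (|V| ≥ 2) with nonnegative edge capacities, let ε ≥ 0, and let N = (V, c_N) be the complete graph on V with edge weights satisfying mincut_G(u,v) ≤ c_N(u,v) ≤ (1+ε)·mincut_G(u,v) for all distinct u, v ∈ V. Let T be a maximum spanning tree of N, i.e., a spanning tree of the complete graph on V whose total c_N-weight is maximum. Then T is a (1+ε)-approximate flow-equivalent tree of G: for every pair of distinct u, v ∈ V, writing u = x_1, …, x_k = v for the unique path from u to v in T and M := min_{1 ≤ i < k} c_N(x_i, x_{i+1}), we have mincut_G(u,v) ≤ M ≤ (1+ε)·mincut_G(u,v).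 -/
/-!
A maximum spanning tree `T` of `(V, cN)` has the cycle property: every edge `xy` on the `T`-path
from `u` to `v` satisfies `cN u v ≤ cN x y`, since otherwise exchanging `xy` for `uv` would give a
heavier spanning tree. Hence the path minimum is at least `cN u v ≥ mincut u v`. Conversely the
path crosses a minimum `u`-`v` cut `S` along some edge `xy`, and
`cN x y ≤ (1 + ε) mincut x y ≤ (1 + ε) cutCap S = (1 + ε) mincut u v`.
-/

/-- The capacity of the cut `(S, Sᶜ)` in the graph `G` with edge capacities `c`:
the sum of `c u v` over all edges `{u,v}` of `G` with `u ∈ S` and `v ∉ S`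
(each cut edge counted once). -/
noncomputable def cutCap {V : Type*} [Fintype V] [DecidableEq V]
    (G : SimpleGraph V) [DecidableRel G.Adj] (c : V → V → ℝ) (S : Finset V) : ℝ :=
  ∑ u ∈ S, ∑ v ∈ Sᶜ, if G.Adj u v then c u v else 0

/-- The minimum `s`-`t` cut value in `G` with edge capacities `c`:
the infimum of `cutCap` over all vertex sets `S` with `s ∈ S` and `t ∉ S`. -/
noncomputable def mincut {V : Type*} [Fintype V] [DecidableEq V]
    (G : SimpleGraph V) [DecidableRel G.Adj] (c : V → V → ℝ) (s t : V) : ℝ :=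
  sInf {x : ℝ | ∃ S : Finset V, s ∈ S ∧ t ∉ S ∧ cutCap G c S = x}

open Finset

section Mincut

variable {V : Type*} [Fintype V] [DecidableEq V] (G : SimpleGraph V) [DecidableRel G.Adj]
  (c : V → V → ℝ)

theorem finite_setOf_cutCap (s t : V) :
    {x : ℝ | ∃ S : Finset V, s ∈ S ∧ t ∉ S ∧ cutCap G c S = x}.Finite :=
  (Set.finite_range (cutCap G c)).subset (by rintro _ ⟨S, -, -, rfl⟩; exact ⟨S, rfl⟩)

theorem mincut_le_cutCap {s t : V} {S : Finset V} (hs : s ∈ S) (ht : t ∉ S) :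
    mincut G c s t ≤ cutCap G c S :=
  csInf_le (finite_setOf_cutCap G c s t).bddBelow ⟨S, hs, ht, rfl⟩

theorem exists_cutCap_eq_mincut {s t : V} (hst : s ≠ t) :
    ∃ S : Finset V, s ∈ S ∧ t ∉ S ∧ cutCap G c S = mincut G c s t :=
  Set.Nonempty.csInf_mem (s := {x | ∃ S : Finset V, s ∈ S ∧ t ∉ S ∧ cutCap G c S = x})
    ⟨_, {s}, mem_singleton_self s, by simpa using hst.symm, rfl⟩ (finite_setOf_cutCap G c s t)

end Mincut

namespace SimpleGraph

theorem Walk.exists_mem_darts_mincut_le {V : Type*} [Fintype V] [DecidableEq V]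
    (G : SimpleGraph V) [DecidableRel G.Adj] (c : V → V → ℝ) {H : SimpleGraph V} {u v : V}
    (huv : u ≠ v) (p : H.Walk u v) :
    ∃ d ∈ p.darts, mincut G c d.fst d.snd ≤ mincut G c u v := by
  obtain ⟨S, hu, hv, hS⟩ := exists_cutCap_eq_mincut G c huv
  obtain ⟨d, hd, hdS, hdS'⟩ := p.exists_boundary_dart S hu hv
  exact ⟨d, hd, hS ▸ mincut_le_cutCap G c hdS hdS'⟩

section Exchange

variable {V : Type*} {G : SimpleGraph V}

theorem Walk.IsTrail.reachable_deleteEdges_of_mem_darts {u v : V} {p : G.Walk u v}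
    (hp : p.IsTrail) {d : G.Dart} (hd : d ∈ p.darts) :
    (G.deleteEdges {d.edge}).Reachable u d.fst ∧ (G.deleteEdges {d.edge}).Reachable d.snd v := by
  induction p with
  | nil => simp at hd
  | cons h p ih =>
    rw [Walk.isTrail_cons] at hp
    rcases List.mem_cons.1 hd with rfl | hd
    · exact ⟨.rfl, reachable_deleteEdges_iff_exists_walk.2 ⟨p, hp.2⟩⟩
    · have hdp : d.edge ∈ p.edges := p.edges_eq_map_darts ▸ List.mem_map_of_mem hd
      obtain ⟨hb, hv⟩ := ih hp.1 hd
      refine ⟨.trans (Adj.reachable ?_) hb, hv⟩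
      rw [deleteEdges_adj, Set.mem_singleton_iff]
      exact ⟨h, fun he => hp.2 (he ▸ hdp)⟩

variable {u v x y : V}

theorem IsTree.not_reachable_deleteEdges (hG : G.IsTree) (hxy : G.Adj x y)
    (hux : (G.deleteEdges {s(x, y)}).Reachable u x)
    (hyv : (G.deleteEdges {s(x, y)}).Reachable y v) :
    ¬(G.deleteEdges {s(x, y)}).Reachable u v := fun huv =>
  isAcyclic_iff_forall_adj_isBridge.1 hG.isAcyclic hxy (hux.symm.trans (huv.trans hyv.symm))

theorem reachable_le_of_adj_le_reachable {H : SimpleGraph V} (h : G.Adj ≤ H.Reachable) :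
    G.Reachable ≤ H.Reachable := by
  rw [reachable_eq_reflTransGen, reachable_eq_reflTransGen] at *
  exact Relation.reflTransGen_closed h

theorem IsTree.deleteEdges_sup_edge (hG : G.IsTree) (hxy : G.Adj x y)
    (hux : (G.deleteEdges {s(x, y)}).Reachable u x)
    (hyv : (G.deleteEdges {s(x, y)}).Reachable y v) :
    (G.deleteEdges {s(x, y)} ⊔ edge u v).IsTree := by
  set F := G.deleteEdges {s(x, y)}
  have hsep : ¬F.Reachable u v := hG.not_reachable_deleteEdges hxy hux hyv
  have huv : u ≠ v := fun h => hsep (h ▸ .rfl)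
  have hFT : F ≤ F ⊔ edge u v := le_sup_left
  have hxy' : (F ⊔ edge u v).Reachable x y :=
    (hux.symm.mono hFT).trans <| .trans (Adj.reachable (Or.inr (by simp [edge_adj, huv])))
      (hyv.symm.mono hFT)
  have hadj : G.Adj ≤ (F ⊔ edge u v).Reachable := by
    intro a b hab
    by_cases he : s(a, b) = s(x, y)
    · rcases Sym2.eq_iff.1 he with ⟨rfl, rfl⟩ | ⟨rfl, rfl⟩
      exacts [hxy', hxy'.symm]
    · exact Adj.reachable (Or.inl (by simp [F, hab, he]))
  have hacyclic := (hG.isAcyclic.anti (deleteEdges_le _)).sup_edge_of_not_reachable hsep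
  have := hG.connected.nonempty
  refine ⟨⟨fun a b => ?_⟩, hacyclic⟩
  exact reachable_le_of_adj_le_reachable hadj a b (hG.connected.preconnected a b)

theorem deleteEdges_sup_edge_of_adj (h : G.Adj x y) :
    G.deleteEdges {s(x, y)} ⊔ edge x y = G :=
  sdiff_sup_cancel ((edge_le_iff G).2 (Or.inr h))

end Exchange

section Weight

variable {V : Type*} [Fintype V] {G H : SimpleGraph V} {w : V → V → ℝ}

open Classical in
noncomputable def adjWeight (H : SimpleGraph V) (w : V → V → ℝ) : ℝ :=
  ∑ x, ∑ y, if H.Adj x y then w x y else 0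

theorem adjWeight_eq_sum [DecidableRel H.Adj] :
    adjWeight H w = ∑ x, ∑ y, if H.Adj x y then w x y else 0 := by
  unfold adjWeight
  congr!

theorem adjWeight_sup (h : Disjoint G H) :
    adjWeight (G ⊔ H) w = adjWeight G w + adjWeight H w := by
  classical
  simp only [adjWeight_eq_sum, ← sum_add_distrib]
  refine sum_congr rfl fun a _ => sum_congr rfl fun b _ => ?_
  by_cases hG : G.Adj a b
  · have hH : ¬H.Adj a b := fun hH => h.le_bot ⟨hG, hH⟩
    simp [hG, hH]
  · simp [hG]

theorem adjWeight_edge {u v : V} (huv : u ≠ v) (hw : ∀ a b, w a b = w b a) :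
    adjWeight (edge u v) w = 2 * w u v := by
  classical
  have hsplit : ∀ a b, (if (edge u v).Adj a b then w a b else 0) =
      (if a = u ∧ b = v then w a b else 0) + (if a = v ∧ b = u then w a b else 0) := by
    intro a b
    simp only [edge_adj]
    split_ifs <;> grind
  simp [adjWeight_eq_sum, hsplit, sum_add_distrib, ite_and, hw v u, two_mul]

end Weight

section MaxSpanningTree

variable {V : Type*} [Fintype V] {T : SimpleGraph V} {w : V → V → ℝ}

def IsMaxSpanningTree (T : SimpleGraph V) (w : V → V → ℝ) : Prop :=
  T.IsTree ∧ ∀ T' : SimpleGraph V, T'.IsTree → adjWeight T' w ≤ adjWeight T w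

theorem IsMaxSpanningTree.le_of_mem_darts (hT : IsMaxSpanningTree T w)
    (hw : ∀ a b, w a b = w b a) {u v : V} {p : T.Walk u v} (hp : p.IsTrail) {d : T.Dart}
    (hd : d ∈ p.darts) : w u v ≤ w d.fst d.snd := by
  obtain ⟨hux, hyv⟩ := hp.reachable_deleteEdges_of_mem_darts hd
  set F := T.deleteEdges {s(d.fst, d.snd)}
  have hsep : ¬F.Reachable u v := hT.1.not_reachable_deleteEdges d.adj hux hyv
  have huv : u ≠ v := fun h => hsep (h ▸ .rfl)
  have hexchange := hT.2 _ (hT.1.deleteEdges_sup_edge d.adj hux hyv)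
  have hT_eq : adjWeight T w = adjWeight F w + 2 * w d.fst d.snd := by
    rw [← adjWeight_edge d.adj.ne hw, ← adjWeight_sup ((disjoint_edge _).2 (by simp [F])),
      deleteEdges_sup_edge_of_adj d.adj]
  rw [adjWeight_sup ((disjoint_edge _).2 fun h => hsep h.reachable), adjWeight_edge huv hw,
    hT_eq] at hexchange
  linarith

end MaxSpanningTree

end SimpleGraph

theorem maxSpanningTree_isApproxFlowEquivalent_general
    {V : Type*} [Fintype V] [DecidableEq V]
    (G : SimpleGraph V) [DecidableRel G.Adj]
    (c : V → V → ℝ)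
    (ε : ℝ) (hε : 0 ≤ ε)
    (cN : V → V → ℝ) (hcNsymm : ∀ u v, cN u v = cN v u)
    (hcN : ∀ u v : V, u ≠ v →
      mincut G c u v ≤ cN u v ∧ cN u v ≤ (1 + ε) * mincut G c u v)
    (T : SimpleGraph V) [DecidableRel T.Adj] (hT : T.IsTree)
    (hmax : ∀ (T' : SimpleGraph V) [DecidableRel T'.Adj], T'.IsTree →
      ((1 : ℝ) / 2) * ∑ x, ∑ y, (if T'.Adj x y then cN x y else 0) ≤
        ((1 : ℝ) / 2) * ∑ x, ∑ y, (if T.Adj x y then cN x y else 0))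
    (u v : V) (huv : u ≠ v)
    (p : T.Walk u v) (hp : p.IsPath) :
    (∀ d ∈ p.darts, mincut G c u v ≤ cN d.toProd.1 d.toProd.2) ∧
    (∃ d ∈ p.darts, cN d.toProd.1 d.toProd.2 ≤ (1 + ε) * mincut G c u v) := by
  have hTmax : T.IsMaxSpanningTree cN := ⟨hT, fun T' hT' => by
    classical
    simpa [SimpleGraph.adjWeight_eq_sum] using hmax T' hT'⟩
  refine ⟨fun d hd => (hcN u v huv).1.trans (hTmax.le_of_mem_darts hcNsymm hp.isTrail hd), ?_⟩
  obtain ⟨d, hd, hcut⟩ := p.exists_mem_darts_mincut_le G c huv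
  refine ⟨d, hd, ?_⟩
  calc cN d.fst d.snd ≤ (1 + ε) * mincut G c d.fst d.snd := (hcN _ _ d.adj.ne).2
    _ ≤ (1 + ε) * mincut G c u v := by gcongr

/-- Let `G` be a finite simple graph on `V` (`|V| ≥ 2`) with
nonnegative symmetric edge capacities `c`, let `ε ≥ 0`, and let `cN` be symmetric
edge weights on the complete graph on `V` with
`mincut(u,v) ≤ cN u v ≤ (1+ε) * mincut(u,v)` for all distinct `u, v`. Let `T` be a
maximum spanning tree of the complete graph with respect to `cN`. Then `T` is a
`(1+ε)`-approximate flow-equivalent tree of `G`: for all distinct `u, v`, the minimum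
`M` of `cN` over the edges of the unique `u`-`v` path in `T` satisfies
`mincut(u,v) ≤ M ≤ (1+ε) * mincut(u,v)` — i.e. every edge of the path has `cN`-weight
at least `mincut(u,v)`, and some edge has `cN`-weight at most `(1+ε) * mincut(u,v)`. -/
theorem maxSpanningTree_isApproxFlowEquivalent
    {V : Type*} [Fintype V] [DecidableEq V]
    (hV : 2 ≤ Fintype.card V)
    (G : SimpleGraph V) [DecidableRel G.Adj]
    (c : V → V → ℝ) (hsymm : ∀ u v, c u v = c v u) (hnonneg : ∀ u v, 0 ≤ c u v)
    (ε : ℝ) (hε : 0 ≤ ε)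
    (cN : V → V → ℝ) (hcNsymm : ∀ u v, cN u v = cN v u)
    (hcN : ∀ u v : V, u ≠ v →
      mincut G c u v ≤ cN u v ∧ cN u v ≤ (1 + ε) * mincut G c u v)
    (T : SimpleGraph V) [DecidableRel T.Adj] (hT : T.IsTree)
    (hmax : ∀ (T' : SimpleGraph V) [DecidableRel T'.Adj], T'.IsTree →
      ((1 : ℝ) / 2) * ∑ x, ∑ y, (if T'.Adj x y then cN x y else 0) ≤
        ((1 : ℝ) / 2) * ∑ x, ∑ y, (if T.Adj x y then cN x y else 0))
    (u v : V) (huv : u ≠ v)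
    (p : T.Walk u v) (hp : p.IsPath) :
    (∀ d ∈ p.darts, mincut G c u v ≤ cN d.toProd.1 d.toProd.2) ∧
    (∃ d ∈ p.darts, cN d.toProd.1 d.toProd.2 ≤ (1 + ε) * mincut G c u v) :=
  maxSpanningTree_isApproxFlowEquivalent_general G c ε hε cN hcNsymm hcN T hT hmax u v huv p hp
end

section
/- Let (V, d) be a finite ultrametric space and let z ∈ V. Then removing z eliminates at most one distinct distance: |D(V)| ≤ |D(V ∖ {z})| + 1, where D(W) = { d(u,v) : u, v ∈ W, u ≠ v }. -/
/-- In a finite ultrametric space `(V, d)`, removing a point `z`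
eliminates at most one distinct distance: `|D(V)| ≤ |D(V \ {z})| + 1`, where
`D(W) = { d u v : u, v ∈ W, u ≠ v }`. -/
theorem ultrametric_remove_point_distances
    {V : Type*} [Fintype V] (d : V → V → ℝ)
    (hsymm : ∀ x y, d x y = d y x)
    (hself : ∀ x, d x x = 0)
    (hpos : ∀ x y, x ≠ y → 0 < d x y)
    (hultra : ∀ x y z, d x z ≤ max (d x y) (d y z))
    (z : V) :
    Set.ncard {r : ℝ | ∃ u v : V, u ≠ v ∧ d u v = r} ≤
      Set.ncard {r : ℝ | ∃ u v : V, u ≠ z ∧ v ≠ z ∧ u ≠ v ∧ d u v = r} + 1 := by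
  classical
  set A := {r : ℝ | ∃ u v : V, u ≠ z ∧ v ≠ z ∧ u ≠ v ∧ d u v = r} with hA
  set B := {r : ℝ | ∃ u v : V, u ≠ v ∧ d u v = r} with hB
  have hAfin : A.Finite := by
    apply Set.Finite.subset (Set.finite_range fun p : V × V => d p.1 p.2)
    rintro r ⟨u, v, _, _, _, rfl⟩; exact ⟨(u, v), rfl⟩
  by_cases hz : ∃ u : V, u ≠ z
  · obtain ⟨s, hs⟩ := hz
    have hne : (Finset.univ.filter (· ≠ z)).Nonempty := ⟨s, by simp [hs]⟩
    obtain ⟨u₀, hu₀mem, hu₀min⟩ := Finset.exists_min_image _ (fun u => d u z) hne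
    have hu₀z : u₀ ≠ z := by simpa using hu₀mem
    have hmin : ∀ u : V, u ≠ z → d u₀ z ≤ d u z := fun u hu => hu₀min u (by simp [hu])
    have key : ∀ v : V, v ≠ z → d z v ∈ A ∪ {d u₀ z} := by
      intro v hv
      by_cases hvu : v = u₀
      · right; simp [hvu, hsymm z u₀]
      · have h1 : d u₀ z ≤ d v z := hmin v hv
        by_cases h2 : d z v ≤ d u₀ v
        · left
          have h3 : d u₀ v ≤ max (d u₀ z) (d z v) := hultra u₀ z v
          have h4 : d u₀ v ≤ d z v := by
            rw [hsymm v z] at h1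
            exact h3.trans (max_le h1 le_rfl)
          exact ⟨u₀, v, hu₀z, hv, fun h => hvu h.symm, le_antisymm h4 h2⟩
        · right
          push_neg at h2
          have h3 : d z v ≤ max (d z u₀) (d u₀ v) := hultra z u₀ v
          have h5 : d z v ≤ d z u₀ := by
            rcases max_cases (d z u₀) (d u₀ v) with ⟨he, _⟩ | ⟨he, _⟩
            · rw [he] at h3; exact h3
            · rw [he] at h3; exact absurd h3 (not_le.mpr h2)
          have heq : d z v = d u₀ z :=
            le_antisymm (by rwa [hsymm z u₀] at h5) (by rwa [hsymm v z] at h1)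
          simp [heq]
    have hsub : B ⊆ A ∪ {d u₀ z} := by
      rintro r ⟨u, v, huv, rfl⟩
      by_cases hu : u = z
      · subst hu; exact key v (Ne.symm huv)
      · by_cases hv : v = z
        · subst hv; rw [hsymm u v]; exact key u huv
        · exact Or.inl ⟨u, v, hu, hv, huv, rfl⟩
    calc B.ncard ≤ (A ∪ {d u₀ z}).ncard :=
          Set.ncard_le_ncard hsub (hAfin.union (Set.finite_singleton _))
      _ ≤ A.ncard + ({d u₀ z} : Set ℝ).ncard := Set.ncard_union_le _ _
      _ = A.ncard + 1 := by rw [Set.ncard_singleton]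
  · push_neg at hz
    have hBe : B = ∅ := by
      ext r
      simp only [hB, Set.mem_setOf_eq, Set.mem_empty_iff_false, iff_false]
      rintro ⟨u, v, huv, _⟩
      exact huv ((hz u).trans (hz v).symm)
    simp [hBe]
end

section
/- Let (V, d) be a finite ultrametric space with |V| = n ≥ 2. Then the number of distinct pairwise distances is at most n − 1, i.e., |D(V)| ≤ n − 1 where D(V) = { d(u,v) : u, v ∈ V, u ≠ v }. -/
open Finset in
private theorem ultra_aux {V : Type*} [Fintype V] [DecidableEq V] (d : V → V → ℝ)
    (hsymm : ∀ x y, d x y = d y x)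
    (hself : ∀ x, d x x = 0)
    (hpos : ∀ x y, x ≠ y → 0 < d x y)
    (hultra : ∀ x y z, d x z ≤ max (d x y) (d y z)) :
    ∀ n (S : Finset V), S.card ≤ n →
      (((S ×ˢ S).filter (fun p => p.1 ≠ p.2)).image (fun p => d p.1 p.2)).card
        ≤ S.card - 1 := by
  intro n
  induction n with
  | zero =>
      intro S hS
      have : S = ∅ := Finset.card_eq_zero.mp (Nat.le_zero.mp hS)
      subst this
      simp
  | succ n ih =>
      intro S hS
      by_cases hSn : S.card ≤ n
      · exact ih S hSn
      have hcard : S.card = n + 1 := by omega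
      set T := ((S ×ˢ S).filter (fun p => p.1 ≠ p.2)).image (fun p => d p.1 p.2) with hT
      by_cases hTne : T.Nonempty
      · obtain ⟨r0, hr0⟩ := hTne
        have hTne' : T.Nonempty := ⟨r0, hr0⟩
        set M := T.max' hTne' with hM
        have hMT : M ∈ T := T.max'_mem hTne'
        -- membership characterization
        have memT : ∀ r, r ∈ T ↔ ∃ u v, u ∈ S ∧ v ∈ S ∧ u ≠ v ∧ d u v = r := by
          intro r
          simp only [hT, Finset.mem_image, Finset.mem_filter, Finset.mem_product]
          constructor
          · rintro ⟨⟨u, v⟩, ⟨⟨hu, hv⟩, huv⟩, hr⟩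
            exact ⟨u, v, hu, hv, huv, hr⟩
          · rintro ⟨u, v, hu, hv, huv, hr⟩
            exact ⟨⟨u, v⟩, ⟨⟨hu, hv⟩, huv⟩, hr⟩
        have hMle : ∀ u v, u ∈ S → v ∈ S → u ≠ v → d u v ≤ M := by
          intro u v hu hv huv
          exact T.le_max' _ ((memT _).mpr ⟨u, v, hu, hv, huv, rfl⟩)
        have hMpos : 0 < M := by
          obtain ⟨u, v, hu, hv, huv, hr⟩ := (memT M).mp hMT
          exact hr ▸ hpos u v huv
        obtain ⟨u0, v0, hu0, hv0, huv0, hdr0⟩ := (memT M).mp hMT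
        set x := u0 with hx
        have hxS : x ∈ S := hu0
        set A := S.filter (fun y => d x y < M) with hA
        set B := S \ A with hB
        have hxA : x ∈ A := by
          simp [hA, hxS, hself, hMpos]
        have hBsub : B ⊆ S := Finset.sdiff_subset
        have hAsub : A ⊆ S := Finset.filter_subset _ _
        have hBmem : ∀ b, b ∈ B → b ∈ S ∧ d x b = M := by
          intro b hb
          rw [hB, Finset.mem_sdiff] at hb
          obtain ⟨hbS, hbA⟩ := hb
          have hxb : x ≠ b := by rintro rfl; exact hbA hxA
          have h1 : ¬ d x b < M := fun h => hbA (by simp [hA, hbS, h])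
          have h2 : d x b ≤ M := hMle _ _ hxS hbS hxb
          exact ⟨hbS, le_antisymm h2 (not_lt.mp h1)⟩
        have hBne : B.Nonempty := by
          by_contra hBe
          rw [Finset.not_nonempty_iff_eq_empty] at hBe
          have hAall : ∀ y ∈ S, y ∈ A := by
            intro y hy
            by_contra hyA
            have : y ∈ B := by rw [hB, Finset.mem_sdiff]; exact ⟨hy, hyA⟩
            simp [hBe] at this
          have h2 : d x v0 < M := (Finset.mem_filter.mp (hAall v0 hv0)).2
          rw [hx, hdr0] at h2
          exact lt_irrefl M h2
        -- cross distances equal M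
        have hcross : ∀ a b, a ∈ A → b ∈ B → d a b = M := by
          intro a b ha hb
          obtain ⟨hbS, hxb⟩ := hBmem b hb
          have haS : a ∈ S := hAsub ha
          have hxa : d x a < M := (Finset.mem_filter.mp ha).2
          have hab : a ≠ b := by
            rintro rfl
            rw [hB, Finset.mem_sdiff] at hb
            exact hb.2 ha
          have h1 : d a b ≤ M := hMle _ _ haS hbS hab
          have h2 : M ≤ d a b := by
            have := hultra x a b
            rw [hxb] at this
            rcases le_max_iff.mp this with h | h
            · exact absurd (lt_of_le_of_lt h hxa) (lt_irrefl M)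
            · exact h
          exact le_antisymm h1 h2
        -- subset decomposition
        set TA := ((A ×ˢ A).filter (fun p => p.1 ≠ p.2)).image (fun p => d p.1 p.2) with hTA
        set TB := ((B ×ˢ B).filter (fun p => p.1 ≠ p.2)).image (fun p => d p.1 p.2) with hTB
        have hsubset : T ⊆ TA ∪ TB ∪ {M} := by
          intro r hr
          obtain ⟨u, v, hu, hv, huv, hduv⟩ := (memT r).mp hr
          have hcases : ∀ w, w ∈ S → w ∈ A ∨ w ∈ B := by
            intro w hw
            by_cases h : w ∈ A
            · exact Or.inl h
            · exact Or.inr (by rw [hB, Finset.mem_sdiff]; exact ⟨hw, h⟩)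
          rcases hcases u hu with hua | hub <;> rcases hcases v hv with hva | hvb
          · apply Finset.mem_union_left; apply Finset.mem_union_left
            simp only [hTA, Finset.mem_image, Finset.mem_filter, Finset.mem_product]
            exact ⟨⟨u, v⟩, ⟨⟨hua, hva⟩, huv⟩, hduv⟩
          · apply Finset.mem_union_right
            simp [← hduv, hcross u v hua hvb]
          · apply Finset.mem_union_right
            have : d u v = M := by rw [hsymm]; exact hcross v u hva hub
            simp [← hduv, this]
          · apply Finset.mem_union_left; apply Finset.mem_union_right
            simp only [hTB, Finset.mem_image, Finset.mem_filter, Finset.mem_product]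
            exact ⟨⟨u, v⟩, ⟨⟨hub, hvb⟩, huv⟩, hduv⟩
        have hcardAB : A.card + B.card = S.card := by
          rw [hB]
          rw [Finset.card_sdiff_of_subset hAsub]
          have := Finset.card_le_card hAsub
          omega
        have hAne : A.Nonempty := ⟨x, hxA⟩
        have hA1 : 1 ≤ A.card := Finset.card_pos.mpr hAne
        have hB1 : 1 ≤ B.card := Finset.card_pos.mpr hBne
        have hAn : A.card ≤ n := by omega
        have hBn : B.card ≤ n := by omega
        have ihA := ih A hAn
        have ihB := ih B hBn
        rw [← hTA] at ihA
        rw [← hTB] at ihB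
        calc T.card ≤ (TA ∪ TB ∪ {M}).card := Finset.card_le_card hsubset
          _ ≤ (TA ∪ TB).card + ({M} : Finset ℝ).card := Finset.card_union_le _ _
          _ ≤ TA.card + TB.card + 1 := by
              have := Finset.card_union_le TA TB
              simp only [Finset.card_singleton]
              omega
          _ ≤ (A.card - 1) + (B.card - 1) + 1 := by omega
          _ ≤ S.card - 1 := by omega
      · rw [Finset.not_nonempty_iff_eq_empty] at hTne
        simp [hTne]

/-- A finite ultrametric space `(V, d)` on `n ≥ 2` points has at
most `n - 1` distinct pairwise distances: `|D(V)| ≤ n - 1`, where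
`D(V) = { d u v : u, v ∈ V, u ≠ v }`. -/
theorem ultrametric_distinct_distances_le
    {V : Type*} [Fintype V] (d : V → V → ℝ)
    (hn : 2 ≤ Fintype.card V)
    (hsymm : ∀ x y, d x y = d y x)
    (hself : ∀ x, d x x = 0)
    (hpos : ∀ x y, x ≠ y → 0 < d x y)
    (hultra : ∀ x y z, d x z ≤ max (d x y) (d y z)) :
    Set.ncard {r : ℝ | ∃ u v : V, u ≠ v ∧ d u v = r} ≤ Fintype.card V - 1 := by
  classical
  have key := ultra_aux d hsymm hself hpos hultra (Fintype.card V) Finset.univ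
    (by simp)
  have hset : {r : ℝ | ∃ u v : V, u ≠ v ∧ d u v = r}
      = ↑(((Finset.univ ×ˢ Finset.univ : Finset (V × V)).filter
          (fun p => p.1 ≠ p.2)).image (fun p => d p.1 p.2)) := by
    ext r
    simp only [Set.mem_setOf_eq, Finset.coe_image, Set.mem_image, Finset.mem_coe,
      Finset.mem_filter, Finset.mem_product, Finset.mem_univ, true_and]
    constructor
    · rintro ⟨u, v, huv, hr⟩
      exact ⟨⟨u, v⟩, huv, hr⟩
    · rintro ⟨⟨u, v⟩, huv, hr⟩
      exact ⟨u, v, huv, hr⟩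
  rw [hset, Set.ncard_coe_finset]
  simpa using key
end

section
/- Let (V, d) be a finite ultrametric space with |V| = n ≥ 2 whose set of distinct pairwise distances has cardinality exactly n − 1, i.e., |D(V)| = n − 1. Then for every subset V' ⊆ V with |V'| = n' ≥ 2, the induced ultrametric on V' has exactly n' − 1 distinct pairwise distances: |D(V')| = n' − 1. -/
section Aux

variable {V : Type*} [DecidableEq V]

/-- The finite set of distinct distances within `W`. -/
noncomputable def DS (d : V → V → ℝ) (W : Finset V) : Finset ℝ :=
  W.offDiag.image fun p => d p.1 p.2

lemma mem_DS {d : V → V → ℝ} {W : Finset V} {r : ℝ} :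
    r ∈ DS d W ↔ ∃ u ∈ W, ∃ v ∈ W, u ≠ v ∧ d u v = r := by
  simp only [DS, Finset.mem_image, Finset.mem_offDiag, Prod.exists]
  constructor
  · rintro ⟨a, b, ⟨ha, hb, hab⟩, hr⟩
    exact ⟨a, ha, b, hb, hab, hr⟩
  · rintro ⟨a, ha, b, hb, hab, hr⟩
    exact ⟨a, b, ⟨ha, hb, hab⟩, hr⟩

lemma stepA (d : V → V → ℝ)
    (hsymm : ∀ x y, d x y = d y x)
    (hself : ∀ x, d x x = 0)
    (hpos : ∀ x y, x ≠ y → 0 < d x y)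
    (hultra : ∀ x y z, d x z ≤ max (d x y) (d y z))
    (W : Finset V) (w : V) :
    (DS d W).card ≤ (DS d (W.erase w)).card + 1 := by
  by_cases hne : (W.erase w).Nonempty
  · set m := ((W.erase w).image (fun u => d w u)).min' (hne.image _) with hm
    have key : ∀ v ∈ W.erase w, d w v ∈ insert m (DS d (W.erase w)) := by
      intro v hv'
      by_cases hrm : d w v = m
      · rw [hrm]; exact Finset.mem_insert_self _ _
      · obtain ⟨u0, hu0, hu0m⟩ : ∃ u0 ∈ W.erase w, d w u0 = m := by
          have := ((W.erase w).image (fun u => d w u)).min'_mem (hne.image _)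
          rw [← hm] at this
          simpa using this
        have hmle : m ≤ d w v := Finset.min'_le _ _ (Finset.mem_image_of_mem _ hv')
        have hmlt : m < d w v := lt_of_le_of_ne hmle (fun h => hrm h.symm)
        have h1 : d u0 v ≤ d w v := by
          have h := hultra u0 w v
          rw [hsymm u0 w, hu0m] at h
          exact h.trans (max_le hmlt.le le_rfl)
        have h2 : d w v ≤ d u0 v := by
          have h := hultra w u0 v
          rw [hu0m] at h
          rcases le_max_iff.mp h with h' | h'
          · exact absurd h' (not_le.mpr hmlt)
          · exact h'
        have heq : d u0 v = d w v := le_antisymm h1 h2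
        have hwv : w ≠ v := fun h => (Finset.mem_erase.mp hv').1 h.symm
        have hu0v : u0 ≠ v := fun h => by
          rw [h, hself] at heq
          exact (hpos w v hwv).ne' heq.symm
        exact Finset.mem_insert_of_mem (mem_DS.mpr ⟨u0, hu0, v, hv', hu0v, heq⟩)
    have hsub : DS d W ⊆ insert m (DS d (W.erase w)) := by
      intro r hr
      obtain ⟨u, hu, v, hv, huv, hrdef⟩ := mem_DS.mp hr
      by_cases hu' : u = w
      · have hv' : v ∈ W.erase w := Finset.mem_erase.mpr ⟨fun h => huv (h ▸ hu'), hv⟩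
        have : d w v = r := hu' ▸ hrdef
        exact this ▸ key v hv'
      · by_cases hv' : v = w
        · have hu'' : u ∈ W.erase w := Finset.mem_erase.mpr ⟨hu', hu⟩
          have : d w u = r := by rw [hsymm w u, ← hv']; exact hrdef
          exact this ▸ key u hu''
        · exact Finset.mem_insert_of_mem (mem_DS.mpr
            ⟨u, Finset.mem_erase.mpr ⟨hu', hu⟩, v, Finset.mem_erase.mpr ⟨hv', hv⟩, huv, hrdef⟩)
    calc (DS d W).card ≤ (insert m (DS d (W.erase w))).card := Finset.card_le_card hsub
      _ ≤ (DS d (W.erase w)).card + 1 := Finset.card_insert_le _ _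
  · rw [Finset.not_nonempty_iff_eq_empty] at hne
    rcases (Finset.erase_eq_empty_iff _ _).mp hne with h | h
    · simp [DS, h]
    · simp [DS, h]

lemma DS_card_le (d : V → V → ℝ)
    (hsymm : ∀ x y, d x y = d y x)
    (hself : ∀ x, d x x = 0)
    (hpos : ∀ x y, x ≠ y → 0 < d x y)
    (hultra : ∀ x y z, d x z ≤ max (d x y) (d y z)) :
    ∀ W : Finset V, W.Nonempty → (DS d W).card ≤ W.card - 1 := by
  intro W
  induction W using Finset.strongInduction with
  | _ W ih =>
    rintro ⟨w, hw⟩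
    by_cases hne : (W.erase w).Nonempty
    · have h1 := stepA d hsymm hself hpos hultra W w
      have h2 := ih (W.erase w) (Finset.erase_ssubset hw) hne
      have hc : (W.erase w).card = W.card - 1 := Finset.card_erase_of_mem hw
      have hp : 0 < (W.erase w).card := Finset.card_pos.mpr hne
      omega
    · rw [Finset.not_nonempty_iff_eq_empty] at hne
      have hW : W = {w} := by
        rcases (Finset.erase_eq_empty_iff _ _).mp hne with h | h
        · exact absurd (h ▸ hw) (Finset.notMem_empty w)
        · exact h
      simp [DS, hW]

lemma chain (d : V → V → ℝ)
    (hsymm : ∀ x y, d x y = d y x)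
    (hself : ∀ x, d x x = 0)
    (hpos : ∀ x y, x ≠ y → 0 < d x y)
    (hultra : ∀ x y z, d x z ≤ max (d x y) (d y z))
    (V' : Finset V) :
    ∀ W : Finset V, V' ⊆ W →
      (DS d W).card + V'.card ≤ (DS d V').card + W.card := by
  intro W
  induction W using Finset.strongInduction with
  | _ W ih =>
    intro hsub
    by_cases h : W = V'
    · subst h; omega
    · obtain ⟨w, hwW, hwV'⟩ : ∃ w ∈ W, w ∉ V' := by
        by_contra h'
        push_neg at h'
        exact h (Finset.Subset.antisymm h' hsub)
      have hsub' : V' ⊆ W.erase w := fun x hx =>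
        Finset.mem_erase.mpr ⟨fun he => hwV' (he ▸ hx), hsub hx⟩
      have h1 := stepA d hsymm hself hpos hultra W w
      have h2 := ih (W.erase w) (Finset.erase_ssubset hwW) hsub'
      have hc : (W.erase w).card = W.card - 1 := Finset.card_erase_of_mem hwW
      have hp : 0 < W.card := Finset.card_pos.mpr ⟨w, hwW⟩
      omega

end Aux

/-- Let `(V, d)` be a finite ultrametric space on `n ≥ 2` points
whose set of distinct pairwise distances has cardinality exactly `n - 1`. Then for
every subset `V' ⊆ V` with `|V'| = n' ≥ 2`, the induced ultrametric on `V'` has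
exactly `n' - 1` distinct pairwise distances. -/
theorem ultrametric_subset_distinct_distances
    {V : Type*} [Fintype V] (d : V → V → ℝ)
    (hn : 2 ≤ Fintype.card V)
    (hsymm : ∀ x y, d x y = d y x)
    (hself : ∀ x, d x x = 0)
    (hpos : ∀ x y, x ≠ y → 0 < d x y)
    (hultra : ∀ x y z, d x z ≤ max (d x y) (d y z))
    (hfull : Set.ncard {r : ℝ | ∃ u v : V, u ≠ v ∧ d u v = r} = Fintype.card V - 1)
    (V' : Finset V) (hV' : 2 ≤ V'.card) :
    Set.ncard {r : ℝ | ∃ u ∈ V', ∃ v ∈ V', u ≠ v ∧ d u v = r} = V'.card - 1 := by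
  classical
  have hset1 : {r : ℝ | ∃ u v : V, u ≠ v ∧ d u v = r} = ↑(DS d (Finset.univ : Finset V)) := by
    ext r
    simp [mem_DS]
  have hset2 : {r : ℝ | ∃ u ∈ V', ∃ v ∈ V', u ≠ v ∧ d u v = r} = ↑(DS d V') := by
    ext r
    simp [mem_DS]
  rw [hset1, Set.ncard_coe_finset] at hfull
  rw [hset2, Set.ncard_coe_finset]
  have hVne : V'.Nonempty := Finset.card_pos.mp (by omega)
  have hB := DS_card_le d hsymm hself hpos hultra V' hVne
  have hC := chain d hsymm hself hpos hultra V' Finset.univ (Finset.subset_univ _)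
  have hcard : V'.card ≤ Fintype.card V := Finset.card_le_univ V'
  rw [Finset.card_univ] at hC
  omega
end

section
/- Let G be a connected finite simple graph on vertex set V with strictly positive edge capacities, let s, t ∈ V be distinct, and let S ⊆ V with s ∈ S and t ∉ S be an s–t cut whose capacity equals mincut_G(s,t). Then the subgraph of G induced on S is connected. -/
theorem cutCap_nonneg {V : Type*} [Fintype V] [DecidableEq V]
    (G : SimpleGraph V) [DecidableRel G.Adj] (c : V → V → ℝ)
    (hpos : ∀ u v, G.Adj u v → 0 < c u v) (S : Finset V) :
    0 ≤ cutCap G c S := by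
  apply Finset.sum_nonneg
  intro u _
  apply Finset.sum_nonneg
  intro v _
  by_cases h : G.Adj u v
  · simp [h, (hpos u v h).le]
  · simp [h]


private lemma exists_boundary_edge {V : Type*} (G : SimpleGraph V)
    (S : Set V) (P : V → Prop)
    (hPmem : ∀ v, P v → v ∈ S)
    (hprop : ∀ u v, P u → v ∈ S → G.Adj u v → P v) :
    ∀ {u t : V} (_ : G.Walk u t), t ∉ S → u ∈ S → ¬ P u →
      ∃ x y, x ∈ S ∧ ¬ P x ∧ y ∉ S ∧ G.Adj x y := by
  intro u t w
  induction w with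
  | nil => intro htS hu _; exact absurd hu htS
  | @cons a b _ hadj p ih =>
    intro htS hu hPu
    by_cases hb : b ∈ S
    · have hPb : ¬ P b := fun hPb => hPu (hprop b a hPb hu hadj.symm)
      exact ih htS hb hPb
    · exact ⟨a, b, hu, hPu, hb, hadj⟩

theorem minimumCut_side_connected
    {V : Type*} [Fintype V] [DecidableEq V]
    (G : SimpleGraph V) [DecidableRel G.Adj] (hconn : G.Connected)
    (c : V → V → ℝ) (hsymm : ∀ u v, c u v = c v u)
    (hpos : ∀ u v, G.Adj u v → 0 < c u v)
    (s t : V) (hst : s ≠ t)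
    (S : Finset V) (hs : s ∈ S) (ht : t ∉ S)
    (hmin : cutCap G c S = mincut G c s t) :
    (G.induce (↑S : Set V)).Connected := by
  classical
  set P : V → Prop := fun v => ∃ h : v ∈ S, (G.induce (↑S : Set V)).Reachable ⟨s, hs⟩ ⟨v, h⟩
    with hPdef
  have hPmem : ∀ v, P v → v ∈ S := fun v hv => hv.1
  have hPs : P s := ⟨hs, SimpleGraph.Reachable.refl _⟩
  -- adjacency inside S propagates P
  have hprop : ∀ u v, P u → v ∈ S → G.Adj u v → P v := by
    intro u v hu hvS hadj
    obtain ⟨huS, hr⟩ := hu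
    refine ⟨hvS, hr.trans ?_⟩
    exact SimpleGraph.Adj.reachable (by simpa using hadj :
      (G.induce (↑S : Set V)).Adj ⟨u, huS⟩ ⟨v, hvS⟩)
  have hall : ∀ v ∈ S, P v := by
    by_contra hno
    push_neg at hno
    obtain ⟨u0, hu0S, hu0P⟩ := hno
    set T : Finset V := Finset.univ.filter P with hT
    have hmemT : ∀ v, v ∈ T ↔ P v := by intro v; simp [hT]
    have hTsub : T ⊆ S := fun v hv => hPmem v ((hmemT v).1 hv)
    have hsT : s ∈ T := (hmemT s).2 hPs
    have htT : t ∉ T := fun h => ht (hPmem t ((hmemT t).1 h))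
    obtain ⟨w⟩ := hconn.preconnected u0 t
    obtain ⟨x, y, hxS, hxP, hyS, hxy⟩ :=
      exists_boundary_edge G (↑S : Set V) P (fun v hv => hPmem v hv)
        (fun u v hu hv hadj => hprop u v hu hv hadj) w (by simpa using ht)
        (by simpa using hu0S) hu0P
    have hxS' : x ∈ S := by simpa using hxS
    have hyS' : y ∉ S := fun h => hyS (by simpa using h)
    have hxT : x ∉ T := fun h => hxP ((hmemT x).1 h)
    -- the function summed
    set f : V → V → ℝ := fun u v => if G.Adj u v then c u v else 0 with hf
    have hfnn : ∀ u v, 0 ≤ f u v := by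
      intro u v
      by_cases h : G.Adj u v
      · simp [hf, h, (hpos u v h).le]
      · simp [hf, h]
    have hsplit : Tᶜ = Sᶜ ∪ (S \ T) := by
      ext v
      simp only [Finset.mem_compl, Finset.mem_union, Finset.mem_sdiff]
      constructor
      · intro hv
        by_cases hvS : v ∈ S
        · exact Or.inr ⟨hvS, hv⟩
        · exact Or.inl hvS
      · rintro (hv | ⟨_, hv⟩)
        · exact fun h => hv (hTsub h)
        · exact hv
    have hdisj : Disjoint (Sᶜ) (S \ T) := by
      rw [Finset.disjoint_left]
      intro v hv hv2
      exact (Finset.mem_compl.1 hv) (Finset.mem_sdiff.1 hv2).1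
    have hzero : ∀ u ∈ T, ∑ v ∈ S \ T, f u v = 0 := by
      intro u hu
      apply Finset.sum_eq_zero
      intro v hv
      obtain ⟨hvS, hvT⟩ := Finset.mem_sdiff.1 hv
      have : ¬ G.Adj u v := by
        intro hadj
        exact hvT ((hmemT v).2 (hprop u v ((hmemT u).1 hu) hvS hadj))
      simp [hf, this]
    have hcutT : cutCap G c T = ∑ u ∈ T, ∑ v ∈ Sᶜ, f u v := by
      unfold cutCap
      rw [hsplit]
      apply Finset.sum_congr rfl
      intro u hu
      rw [Finset.sum_union hdisj, hzero u hu, add_zero]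
    have hcutS : cutCap G c S = (∑ u ∈ S \ T, ∑ v ∈ Sᶜ, f u v)
        + ∑ u ∈ T, ∑ v ∈ Sᶜ, f u v := by
      unfold cutCap
      rw [← Finset.sum_sdiff hTsub]
    have hposrest : 0 < ∑ u ∈ S \ T, ∑ v ∈ Sᶜ, f u v := by
      apply Finset.sum_pos'
      · intro u _
        exact Finset.sum_nonneg fun v _ => hfnn u v
      · refine ⟨x, Finset.mem_sdiff.2 ⟨hxS', hxT⟩, ?_⟩
        apply Finset.sum_pos'
        · intro v _
          exact hfnn x v
        · exact ⟨y, Finset.mem_compl.2 hyS', by simp [hf, hxy, hpos x y hxy]⟩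
    have hlt : cutCap G c T < cutCap G c S := by
      rw [hcutT, hcutS]; linarith
    have hle : mincut G c s t ≤ cutCap G c T := by
      apply csInf_le
      · refine ⟨0, ?_⟩
        rintro z ⟨S', _, _, rfl⟩
        exact cutCap_nonneg G c hpos S'
      · exact ⟨T, hsT, htT, rfl⟩
    rw [hmin] at hlt
    linarith
  rw [SimpleGraph.connected_iff]
  constructor
  · rintro ⟨a, ha⟩ ⟨b, hb⟩
    have haS : a ∈ S := by simpa using ha
    have hbS : b ∈ S := by simpa using hb
    obtain ⟨h1, r1⟩ := hall a haS
    obtain ⟨h2, r2⟩ := hall b hbS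
    exact r1.symm.trans r2
  · exact ⟨⟨s, by simpa using hs⟩⟩
end

section
/- Let G = (V, E) be a finite simple graph with n = |V| vertices and m = |E| edges, let V = V_1 ⊔ ⋯ ⊔ V_l be a partition of V into nonempty parts, and let T be a tree on the index set {1, …, l} (a partition tree). For each i, let G_i be the capacitated auxiliary graph (CAG) of part V_i: its vertex set consists of the elements of V_i together with one contracted vertex for each neighbor j of i in T (the contracted vertex for j representing the union of all parts V_k such that k lies in the connected component of T − i containing j), and its edges are the unordered pairs {a, b} of distinct vertices of G_i such that some edge of G has one endpoint mapped to a and the other mapped to b under this contraction (parallel edges merged into a single edge). Then the total number of edges over all CAGs satisfies Σ_{i=1}^{l} |E(G_i)| ≤ 2n + 3m. -/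
open Finset SimpleGraph

section TreeAux
variable {ι : Type*} [DecidableEq ι] {T : SimpleGraph ι}

/-- In a path, anything in the `dropUntil` part other than the split vertex is not
in the `takeUntil` part. -/
lemma CAG.notMem_takeUntil_of_mem_dropUntil {x y u v : ι}
    {p : T.Walk x y} (hp : p.IsPath) (hu : u ∈ p.support)
    (hv : v ∈ (p.dropUntil u hu).support) (hvu : v ≠ u) :
    v ∉ (p.takeUntil u hu).support := by
  intro hvt
  have hnd : ((p.takeUntil u hu).append (p.dropUntil u hu)).support.Nodup := by
    rw [p.take_spec hu]; exact hp.support_nodup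
  rw [SimpleGraph.Walk.support_append] at hnd
  have hv' : v ∈ (p.dropUntil u hu).support.tail := by
    rcases List.mem_cons.mp ((p.dropUntil u hu).support_eq_cons ▸ hv) with h | h
    · exact absurd h hvu
    · exact h
  exact (List.disjoint_of_nodup_append hnd) hvt hv'

lemma CAG.notMem_takeUntil' {x y u : ι} {p : T.Walk x y} (hp : p.IsPath)
    (hu : u ∈ p.support) (hyu : y ≠ u) : y ∉ (p.takeUntil u hu).support :=
  CAG.notMem_takeUntil_of_mem_dropUntil hp hu ((p.dropUntil u hu).end_mem_support) hyu

lemma CAG.notMem_dropUntil {x y u : ι} {p : T.Walk x y} (hp : p.IsPath)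
    (hu : u ∈ p.support) (hxu : x ≠ u) : x ∉ (p.dropUntil u hu).support := by
  intro hxd
  have hnd : ((p.takeUntil u hu).append (p.dropUntil u hu)).support.Nodup := by
    rw [p.take_spec hu]; exact hp.support_nodup
  rw [SimpleGraph.Walk.support_append] at hnd
  have hxt : x ∈ (p.takeUntil u hu).support := (p.takeUntil u hu).start_mem_support
  have hxd' : x ∈ (p.dropUntil u hu).support.tail := by
    rcases List.mem_cons.mp ((p.dropUntil u hu).support_eq_cons ▸ hxd) with h | h
    · exact absurd h hxu
    · exact h
  exact (List.disjoint_of_nodup_append hnd) hxt hxd'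

variable (hT : T.IsTree) {step : ι → ι → ι}
variable (hstep : ∀ i k : ι, i ≠ k →
      T.Adj i (step i k) ∧ ∃ p : T.Walk (step i k) k, i ∉ p.support)

include hT hstep in
lemma CAG.factA {i k k' : ι} (hik : i ≠ k) (hik' : i ≠ k')
    (W : T.Walk k k') (hW : i ∉ W.support) : step i k = step i k' := by
  obtain ⟨h1, p1, hp1⟩ := hstep i k hik
  obtain ⟨h2, p2, hp2⟩ := hstep i k' hik'
  by_contra hne
  have hiW' : i ∉ (p1.append (W.append p2.reverse)).support := by
    simp only [SimpleGraph.Walk.mem_support_append_iff,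
      SimpleGraph.Walk.support_reverse, List.mem_reverse]
    push_neg
    exact ⟨hp1, hW, hp2⟩
  have hiP1 : i ∉ (p1.append (W.append p2.reverse)).toPath.1.support := fun h =>
    hiW' (SimpleGraph.Walk.support_toPath_subset _ h)
  have hP2 : (SimpleGraph.Walk.cons h1.symm
      (SimpleGraph.Walk.cons h2 SimpleGraph.Walk.nil) :
      T.Walk (step i k) (step i k')).IsPath := by
    simp [SimpleGraph.Walk.isPath_def, h1.ne', h2.ne, hne, h2.ne']
  have heq := isAcyclic_iff_path_unique.mp hT.IsAcyclic
    (p1.append (W.append p2.reverse)).toPath ⟨_, hP2⟩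
  apply hiP1
  rw [show ((p1.append (W.append p2.reverse)).toPath.1) = _ from congrArg Subtype.val heq]
  simp

include hT hstep in
lemma CAG.core_uniq {r a b i i' : ι}
    (hia : i ≠ a) (hib : i ≠ b) (hsi : step i a ≠ step i b)
    (hpi : i ≠ r → step i r ≠ step i a ∧ step i r ≠ step i b)
    (hia' : i' ≠ a) (hib' : i' ≠ b) (hsi' : step i' a ≠ step i' b)
    (hpi' : i' ≠ r → step i' r ≠ step i' a ∧ step i' r ≠ step i' b) :
    i = i' := by
  by_contra hii'
  obtain ⟨W⟩ := hT.isConnected.preconnected a b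
  set p := W.toPath.1 with hpdef
  have hpPath : p.IsPath := W.toPath.2
  have pass : ∀ j : ι, j ≠ a → j ≠ b → step j a ≠ step j b → j ∈ p.support := by
    intro j hja hjb hsj
    by_contra hjW
    exact hsj (CAG.factA hT hstep hja hjb p hjW)
  have hip : i ∈ p.support := pass i hia hib hsi
  have hi'p : i' ∈ p.support := pass i' hia' hib' hsi'
  have claim : ∀ j j' : ι, j ≠ a → j ≠ b → j' ≠ j →
      (hjp : j ∈ p.support) → j' ∈ p.support →
      step j j' = step j a ∨ step j j' = step j b := by
    intro j j' hja hjb hj'j hjp hj'p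
    rw [← p.take_spec hjp, SimpleGraph.Walk.mem_support_append_iff] at hj'p
    rcases hj'p with hj't | hj'd
    · -- j' in the a-side
      left
      have htP : (p.takeUntil j hjp).IsPath := hpPath.takeUntil hjp
      have hjn : j ∉ ((p.takeUntil j hjp).takeUntil j' hj't).support :=
        CAG.notMem_takeUntil' htP hj't (fun h => hj'j h.symm)
      have hjr : j ∉ ((p.takeUntil j hjp).takeUntil j' hj't).reverse.support := by
        rwa [SimpleGraph.Walk.support_reverse, List.mem_reverse]
      exact CAG.factA hT hstep hj'j.symm hja
        ((p.takeUntil j hjp).takeUntil j' hj't).reverse hjr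
    · -- j' in the b-side
      right
      have hdP : (p.dropUntil j hjp).IsPath := hpPath.dropUntil hjp
      have hjn : j ∉ ((p.dropUntil j hjp).dropUntil j' hj'd).support :=
        CAG.notMem_dropUntil hdP hj'd (fun h => hj'j h.symm)
      exact CAG.factA hT hstep hj'j.symm hjb
        ((p.dropUntil j hjp).dropUntil j' hj'd) hjn
  have hD : step i i' = step i a ∨ step i i' = step i b :=
    claim i i' hia hib (Ne.symm hii') hip hi'p
  have hD' : step i' i = step i' a ∨ step i' i = step i' b :=
    claim i' i hia' hib' hii' hi'p hip
  rcases eq_or_ne i r with rfl | hir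
  · obtain ⟨h1, h2⟩ := hpi' (Ne.symm hii')
    rcases hD' with h | h
    · exact h1 h
    · exact h2 h
  rcases eq_or_ne i' r with rfl | hir'
  · obtain ⟨h1, h2⟩ := hpi hii'
    rcases hD with h | h
    · exact h1 h
    · exact h2 h
  have h1 : step i r ≠ step i i' := by
    obtain ⟨ha1, ha2⟩ := hpi hir
    rcases hD with h | h <;> rw [h]
    exacts [ha1, ha2]
  have h2 : step i' r ≠ step i' i := by
    obtain ⟨ha1, ha2⟩ := hpi' hir'
    rcases hD' with h | h <;> rw [h]
    exacts [ha1, ha2]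
  obtain ⟨Wr⟩ := hT.isConnected.preconnected r i
  set pr := Wr.toPath.1 with hprdef
  have hprP : pr.IsPath := Wr.toPath.2
  have hi'pr : i' ∈ pr.support := by
    by_contra h
    exact h2 (CAG.factA hT hstep hir' (Ne.symm hii') pr h)
  have hnt : i ∉ (pr.takeUntil i' hi'pr).support :=
    CAG.notMem_takeUntil' hprP hi'pr hii'
  exact h1 (CAG.factA hT hstep hir hii' (pr.takeUntil i' hi'pr) hnt)

end TreeAux


lemma CAG.card_filter_image_le {α β : Type*} [DecidableEq β] (s : Finset α) (f : α → β)
    (p : β → Prop) [DecidablePred p] :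
    ((s.image f).filter p).card ≤ (s.filter fun a => p (f a)).card := by
  have hsub : (s.image f).filter p ⊆ (s.filter fun a => p (f a)).image f := by
    intro b hb
    rw [Finset.mem_filter, Finset.mem_image] at hb
    obtain ⟨⟨a, ha, rfl⟩, hp⟩ := hb
    exact Finset.mem_image_of_mem f (Finset.mem_filter.mpr ⟨ha, hp⟩)
  exact le_trans (Finset.card_le_card hsub) Finset.card_image_le



/-- Let `G` be a finite simple graph on `n` vertices with `m`
edges, let `blk : V → ι` describe a partition of `V` into nonempty blocks (the
fibers of the surjection `blk`), and let `T` be a tree on the index set `ι` (a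
partition tree). For `i ≠ k`, `step i k` is the neighbor of `i` in `T` lying on the
unique path from `i` to `k` (equivalently, `k` lies in the component of `T - i`
containing `step i k`, i.e. `step i k` reaches `k` by a walk avoiding `i`).
The contraction map `q i` of block `i` sends `x ∈ V` to itself if `blk x = i`, and
to the contracted vertex corresponding to the neighbor `step i (blk x)` otherwise.
The capacitated auxiliary graph (CAG) `G_i` has as edges the images under
`Sym2.map (q i)` of the edges of `G` whose endpoints get distinct images (parallel
edges merged into a single edge). Then the total number of edges over all CAGs is
at most `2n + 3m`. -/
theorem total_size_of_CAGs
    {V ι : Type*} [Fintype V] [Fintype ι] [DecidableEq V] [DecidableEq ι]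
    (G : SimpleGraph V) [DecidableRel G.Adj]
    (blk : V → ι) (hblk : Function.Surjective blk)
    (T : SimpleGraph ι) (hT : T.IsTree)
    (step : ι → ι → ι)
    (hstep : ∀ i k : ι, i ≠ k →
      T.Adj i (step i k) ∧ ∃ p : T.Walk (step i k) k, i ∉ p.support)
    (q : ι → V → V ⊕ ι)
    (hq : ∀ (i : ι) (x : V),
      q i x = if blk x = i then Sum.inl x else Sum.inr (step i (blk x))) :
    ∑ i : ι,
        ((G.edgeFinset.image (Sym2.map (q i))).filter (fun e => ¬ e.IsDiag)).card
      ≤ 2 * Fintype.card V + 3 * G.edgeFinset.card := by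
  classical
  rcases isEmpty_or_nonempty ι with hι | hι
  · simp [Finset.univ_eq_empty]
  obtain ⟨r⟩ := hι
  set E := G.edgeFinset with hE
  set n := Fintype.card V with hn
  have hqr : ∀ (i : ι) (x : V), blk x ≠ i → q i x = Sum.inr (step i (blk x)) := by
    intro i x h; rw [hq]; simp [h]
  have hql : ∀ (i : ι) (x : V), blk x = i → q i x = Sum.inl x := by
    intro i x h; rw [hq]; simp [h]
  set PA : ι → Sym2 V → Prop := fun i w => ∀ x ∈ w, blk x = i with hPA
  set PB : ι → Sym2 V → Prop :=
    fun i w => (∃ x ∈ w, blk x = i) ∧ (∃ x ∈ w, blk x ≠ i) with hPB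
  set PD : ι → Sym2 V → Prop := fun i w => ¬ (Sym2.map (q i) w).IsDiag
      ∧ (∀ y ∈ Sym2.map (q i) w, y.isRight = true)
      ∧ (i ≠ r → Sum.inr (step i r) ∉ Sym2.map (q i) w) with hPD
  -- Per-part bound
  have key : ∀ i : ι,
      ((E.image (Sym2.map (q i))).filter (fun e => ¬ e.IsDiag)).card ≤
      ((E.filter (PA i)).card + (E.filter (PB i)).card + (E.filter (PD i)).card)
        + (T.neighborFinset i).card := by
    intro i
    set Mi := Sym2.map (q i) with hMi
    set F := (E.image Mi).filter (fun e => ¬ e.IsDiag) with hF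
    set R : Sym2 (V ⊕ ι) → Prop := fun e => ∀ y ∈ e, y.isRight = true with hR
    have hsplit : F.card = (F.filter R).card + (F.filter (fun e => ¬ R e)).card :=
      (Finset.card_filter_add_card_filter_not R).symm
    have hnonVV : (F.filter (fun e => ¬ R e)).card ≤
        (E.filter (PA i)).card + (E.filter (PB i)).card := by
      have h1 : (F.filter fun e => ¬ R e).card ≤
          (E.filter fun w => (¬ (Mi w).IsDiag) ∧ ¬ R (Mi w)).card := by
        rw [hF, Finset.filter_filter]
        exact CAG.card_filter_image_le E Mi _
      refine h1.trans ?_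
      have himp : ∀ w, w ∈ E → ((¬ (Mi w).IsDiag) ∧ ¬ R (Mi w)) → (PA i w ∨ PB i w) := by
        intro w
        induction w using Sym2.ind with
        | _ u v =>
          intro hwE hw
          obtain ⟨hnd, hnR⟩ := hw
          simp only [hR, hMi, Sym2.map_pair_eq] at hnR
          push_neg at hnR
          obtain ⟨y, hy, hyL⟩ := hnR
          have hone : blk u = i ∨ blk v = i := by
            rcases Sym2.mem_iff.mp hy with rfl | rfl
            · left; by_contra h; rw [hqr i u h] at hyL; simp at hyL
            · right; by_contra h; rw [hqr i v h] at hyL; simp at hyL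
          by_cases hboth : blk u = i ∧ blk v = i
          · left
            simp only [hPA]
            intro x hx
            rcases Sym2.mem_iff.mp hx with rfl | rfl
            exacts [hboth.1, hboth.2]
          · right
            simp only [hPB]
            constructor
            · rcases hone with h | h
              exacts [⟨u, Sym2.mem_mk_left _ _, h⟩, ⟨v, Sym2.mem_mk_right _ _, h⟩]
            · rcases hone with h | h
              · exact ⟨v, Sym2.mem_mk_right _ _, fun hv => hboth ⟨h, hv⟩⟩
              · exact ⟨u, Sym2.mem_mk_left _ _, fun hu => hboth ⟨hu, h⟩⟩
      have hsub : (E.filter fun w => (¬ (Mi w).IsDiag) ∧ ¬ R (Mi w)) ⊆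
          E.filter (fun w => PA i w ∨ PB i w) := by
        intro w hw
        rw [Finset.mem_filter] at hw ⊢
        exact ⟨hw.1, himp w hw.1 hw.2⟩
      calc (E.filter fun w => (¬ (Mi w).IsDiag) ∧ ¬ R (Mi w)).card
          ≤ (E.filter (fun w => PA i w ∨ PB i w)).card := Finset.card_le_card hsub
        _ = ((E.filter (PA i)) ∪ (E.filter (PB i))).card := by rw [Finset.filter_or]
        _ ≤ _ := Finset.card_union_le _ _
    have hVV : (F.filter R).card ≤ (T.neighborFinset i).card + (E.filter (PD i)).card := by
      rcases eq_or_ne i r with rfl | hir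
      · have h1 : (F.filter R).card ≤
            (E.filter fun w => (¬ (Mi w).IsDiag) ∧ R (Mi w)).card := by
          rw [hF, Finset.filter_filter]
          exact CAG.card_filter_image_le E Mi _
        refine le_trans h1 (le_trans (Finset.card_le_card ?_) (Nat.le_add_left _ _))
        intro w hw
        rw [Finset.mem_filter] at hw ⊢
        refine ⟨hw.1, ?_⟩
        simp only [hPD]
        exact ⟨hw.2.1, hw.2.2, fun h => absurd rfl h⟩
      · set π : V ⊕ ι := Sum.inr (step i r) with hπ
        have hsplit2 : (F.filter R).card = ((F.filter R).filter (fun e => π ∈ e)).card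
            + ((F.filter R).filter (fun e => ¬ π ∈ e)).card :=
          (Finset.card_filter_add_card_filter_not _).symm
        have hpar : ((F.filter R).filter (fun e => π ∈ e)).card ≤
            (T.neighborFinset i).card := by
          have hsub : (F.filter R).filter (fun e => π ∈ e) ⊆
              (T.neighborFinset i).image (fun j => s(π, Sum.inr j)) := by
            intro e he
            rw [Finset.mem_filter] at he
            obtain ⟨he1, hπe⟩ := he
            rw [Finset.mem_filter] at he1
            obtain ⟨he2, hRe⟩ := he1
            rw [hF, Finset.mem_filter, Finset.mem_image] at he2
            obtain ⟨⟨w, hwE, rfl⟩, hnd⟩ := he2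
            simp only [hR] at hRe
            revert hπe hRe hnd
            induction w using Sym2.ind with
            | _ u v =>
              intro hπe hnd hRe
              rw [hMi, Sym2.map_pair_eq] at hnd hRe hπe ⊢
              have hu : blk u ≠ i := by
                intro h
                have := hRe (q i u) (Sym2.mem_mk_left _ _)
                rw [hql i u h] at this; simp at this
              have hv : blk v ≠ i := by
                intro h
                have := hRe (q i v) (Sym2.mem_mk_right _ _)
                rw [hql i v h] at this; simp at this
              rw [hqr i u hu, hqr i v hv] at hnd hπe ⊢
              rcases Sym2.mem_iff.mp hπe with h | h
              · refine Finset.mem_image.mpr ⟨step i (blk v), ?_, ?_⟩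
                · rw [SimpleGraph.mem_neighborFinset]
                  exact (hstep i (blk v) (Ne.symm hv)).1
                · rw [h]
              · refine Finset.mem_image.mpr ⟨step i (blk u), ?_, ?_⟩
                · rw [SimpleGraph.mem_neighborFinset]
                  exact (hstep i (blk u) (Ne.symm hu)).1
                · rw [h, Sym2.eq_swap]
          exact le_trans (Finset.card_le_card hsub) Finset.card_image_le
        have hnopar : ((F.filter R).filter (fun e => ¬ π ∈ e)).card ≤
            (E.filter (PD i)).card := by
          have h1 : ((F.filter R).filter (fun e => ¬ π ∈ e)).card ≤
              (E.filter fun w => (¬ (Mi w).IsDiag) ∧ (R (Mi w) ∧ ¬ π ∈ Mi w)).card := by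
            rw [hF, Finset.filter_filter, Finset.filter_filter]
            exact CAG.card_filter_image_le E Mi _
          refine h1.trans (Finset.card_le_card ?_)
          intro w hw
          rw [Finset.mem_filter] at hw ⊢
          refine ⟨hw.1, ?_⟩
          simp only [hPD]
          exact ⟨hw.2.1, hw.2.2.1, fun _ => hw.2.2.2⟩
        omega
    omega
  -- translation of PD to the tree-level conditions
  have hPDtr : ∀ (i : ι) (u v : V), PD i s(u, v) →
      i ≠ blk u ∧ i ≠ blk v ∧ step i (blk u) ≠ step i (blk v) ∧
      (i ≠ r → step i r ≠ step i (blk u) ∧ step i r ≠ step i (blk v)) := by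
    intro i u v hPDi
    simp only [hPD] at hPDi
    obtain ⟨hd, hr2, hm⟩ := hPDi
    rw [Sym2.map_pair_eq] at hd hr2 hm
    have hu : blk u ≠ i := by
      intro h
      have := hr2 (q i u) (Sym2.mem_mk_left _ _)
      rw [hql i u h] at this; simp at this
    have hv : blk v ≠ i := by
      intro h
      have := hr2 (q i v) (Sym2.mem_mk_right _ _)
      rw [hql i v h] at this; simp at this
    rw [hqr i u hu, hqr i v hv] at hd hm
    rw [Sym2.mk_isDiag_iff] at hd
    refine ⟨Ne.symm hu, Ne.symm hv, fun h => hd (by rw [h]), ?_⟩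
    intro hir
    have hm' := hm hir
    rw [Sym2.mem_iff] at hm'
    push_neg at hm'
    exact ⟨fun h => hm'.1 (by rw [h]), fun h => hm'.2 (by rw [h])⟩
  -- per-edge bound
  have perEdge : ∀ w ∈ E,
      (Finset.univ.filter (fun i => PA i w)).card
      + (Finset.univ.filter (fun i => PB i w)).card
      + (Finset.univ.filter (fun i => PD i w)).card ≤ 3 := by
    intro w
    induction w using Sym2.ind with
    | _ u v =>
      intro hw
      by_cases hab : blk u = blk v
      · have hA : (Finset.univ.filter (fun i => PA i s(u, v))) ⊆ {blk u} := by
          intro i hi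
          rw [Finset.mem_filter] at hi
          simp only [hPA] at hi
          exact Finset.mem_singleton.mpr ((hi.2 u (Sym2.mem_mk_left u v)).symm)
        have hB : (Finset.univ.filter (fun i => PB i s(u, v))) = ∅ := by
          rw [Finset.filter_eq_empty_iff]
          intro i _
          simp only [hPB]
          rintro ⟨⟨x, hx, hxi⟩, ⟨y, hy, hyi⟩⟩
          apply hyi
          rw [← hxi]
          rcases Sym2.mem_iff.mp hx with rfl | rfl <;>
            rcases Sym2.mem_iff.mp hy with rfl | rfl <;> simp [hab]
        have hD : (Finset.univ.filter (fun i => PD i s(u, v))) = ∅ := by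
          rw [Finset.filter_eq_empty_iff]
          intro i _ hPDi
          obtain ⟨_, _, h3, _⟩ := hPDtr i u v hPDi
          exact h3 (by rw [hab])
        have := Finset.card_le_card hA
        rw [Finset.card_singleton] at this
        rw [hB, hD]
        simp
        omega
      · have hA : (Finset.univ.filter (fun i => PA i s(u, v))) = ∅ := by
          rw [Finset.filter_eq_empty_iff]
          intro i _ hPAi
          simp only [hPA] at hPAi
          exact hab ((hPAi u (Sym2.mem_mk_left u v)).trans
            (hPAi v (Sym2.mem_mk_right u v)).symm)
        have hB : (Finset.univ.filter (fun i => PB i s(u, v))) ⊆ {blk u, blk v} := by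
          intro i hi
          rw [Finset.mem_filter] at hi
          simp only [hPB] at hi
          obtain ⟨⟨x, hx, hxi⟩, -⟩ := hi.2
          rcases Sym2.mem_iff.mp hx with rfl | rfl
          · exact Finset.mem_insert.mpr (Or.inl hxi.symm)
          · exact Finset.mem_insert.mpr (Or.inr (Finset.mem_singleton.mpr hxi.symm))
        have hD : (Finset.univ.filter (fun i => PD i s(u, v))).card ≤ 1 := by
          refine Finset.card_le_one.mpr ?_
          intro i hi i' hi'
          rw [Finset.mem_filter] at hi hi'
          obtain ⟨h1, h2, h3, h4⟩ := hPDtr i u v hi.2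
          obtain ⟨h1', h2', h3', h4'⟩ := hPDtr i' u v hi'.2
          exact CAG.core_uniq hT hstep h1 h2 h3 h4 h1' h2' h3' h4'
        have hBc := Finset.card_le_card hB
        have hBc2 : ({blk u, blk v} : Finset ι).card ≤ 2 :=
          le_trans (Finset.card_insert_le _ _) (by rw [Finset.card_singleton])
        have hAc : (Finset.univ.filter (fun i => PA i s(u, v))).card = 0 := by
          rw [hA]; rfl
        omega
  -- sum swap
  have swap : ∀ (P : ι → Sym2 V → Prop) (_ : ∀ i, DecidablePred (P i))
      (_ : ∀ w, DecidablePred (fun i => P i w)),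
      ∑ i : ι, (E.filter (P i)).card
        = ∑ w ∈ E, (Finset.univ.filter (fun i => P i w)).card := by
    intro P _ _
    simp only [Finset.card_filter]
    exact Finset.sum_comm
  have sum3 : ∑ i : ι, ((E.filter (PA i)).card + (E.filter (PB i)).card
      + (E.filter (PD i)).card) ≤ 3 * E.card := by
    rw [Finset.sum_add_distrib, Finset.sum_add_distrib,
      swap PA inferInstance inferInstance, swap PB inferInstance inferInstance,
      swap PD inferInstance inferInstance,
      ← Finset.sum_add_distrib, ← Finset.sum_add_distrib]
    calc ∑ w ∈ E, ((Finset.univ.filter (fun i => PA i w)).card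
          + (Finset.univ.filter (fun i => PB i w)).card
          + (Finset.univ.filter (fun i => PD i w)).card)
        ≤ ∑ _w ∈ E, 3 := Finset.sum_le_sum perEdge
      _ = 3 * E.card := by rw [Finset.sum_const, smul_eq_mul, mul_comm]
  have sumdeg : ∑ i : ι, (T.neighborFinset i).card ≤ 2 * n := by
    have h1 : ∑ i : ι, T.degree i = 2 * T.edgeFinset.card :=
      T.sum_degrees_eq_twice_card_edges
    have h2 : T.edgeFinset.card + 1 = Fintype.card ι := hT.card_edgeFinset
    have h3 : Fintype.card ι ≤ n := Fintype.card_le_of_surjective blk hblk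
    have h4 : ∑ i : ι, (T.neighborFinset i).card = ∑ i : ι, T.degree i := rfl
    omega
  calc ∑ i : ι, ((E.image (Sym2.map (q i))).filter (fun e => ¬ e.IsDiag)).card
      ≤ ∑ i : ι, (((E.filter (PA i)).card + (E.filter (PB i)).card
          + (E.filter (PD i)).card) + (T.neighborFinset i).card) :=
        Finset.sum_le_sum (fun i _ => key i)
    _ = (∑ i : ι, ((E.filter (PA i)).card + (E.filter (PB i)).card
          + (E.filter (PD i)).card)) + ∑ i : ι, (T.neighborFinset i).card :=
        Finset.sum_add_distrib
    _ ≤ 3 * E.card + 2 * n := add_le_add sum3 sumdeg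
    _ ≤ 2 * n + 3 * E.card := by omega
end
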